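/- Let A ⊆ ℝ be a nonempty compact set whose complement's bounded components have lengths given by the fractal string L_A = (ℓ_j)_{j≥1} listed in nonincreasing order (with multiplicity). Define the geometric counting function N(x) = #{j : ℓ_j^{-1} ≤ x} and the basic function β₀(A;t) = 1 + #{j : ℓ_j > 2t}. Then for every ε > 0: vol(A_ε \ A) = 2∫_0^ε β₀(A;t) dt = 2ε + 2∫_0^ε N(1/(2t)) dt. -/

import Mathlib

open Metric MeasureTheory Filter Set Topology
open scoped ENNReal

noncomputable section

/-!
Outside the convex hull `[m, M]` of `A`, the set `A_ε \ A` consists of the two intervals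
`[m - ε, m)` and `(M, M + ε]`. Inside it, the endpoints of a gap `(a, b)` lie in `A` and no point
of `A` lies between them, so the gap meets `A_ε` in the points within `ε` of `a` or `b`, a set of
measure `min (b - a) (2ε)`. Hence `vol(A_ε \ A) = 2ε + ∑ min (ℓ_j, 2ε)`. The layer-cake formula
for the counting measure on the gaps, with the lengths truncated at `2ε`, gives
`∑ min (ℓ_j, 2ε) = 2 ∫₀^ε #{j | 2t ≤ ℓ_j} dt`; the strict count differs from this one only at the
countably many `t` with `2t = ℓ_j`.
-/

theorem MeasureTheory.count_real_eq_ncard {α : Type*} [MeasurableSpace α]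
    [MeasurableSingletonClass α] (s : Set α) : Measure.count.real s = s.ncard := by
  rcases s.finite_or_infinite with hs | hs
  · rw [measureReal_def, Measure.count_apply_finite s hs, Set.ncard_eq_toFinset_card s hs]
    simp
  · rw [measureReal_def, Measure.count_apply_infinite hs, hs.ncard]
    simp

theorem MeasureTheory.Integrable.integrableOn_measureReal_lt {α : Type*} [MeasurableSpace α]
    {μ : Measure α} {f : α → ℝ} (hf : Integrable f μ) (hf0 : 0 ≤ᵐ[μ] f) :
    IntegrableOn (fun t => μ.real {a | t < f a}) (Ioi 0) := by
  refine integrable_toReal_of_lintegral_ne_top ?_ ?_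
  · have hanti : Antitone fun t : ℝ => μ {a | t < f a} :=
      fun _ _ hst => measure_mono fun _ ha => hst.trans_lt ha
    exact hanti.measurable.aemeasurable
  · rw [← lintegral_eq_lintegral_meas_lt μ hf0 hf.aemeasurable]
    exact hf.lintegral_lt_top.ne

section LayerCake

variable {ι : Type*} {f : ι → ℝ}

theorem integral_ncard_le_eq_tsum_min [Countable ι] (hf : Summable f) (hf0 : 0 ≤ f) {ε : ℝ}
    (hε : 0 ≤ ε) : ∫ t in (0)..ε, ({i | t ≤ f i}.ncard : ℝ) = ∑' i, min (f i) ε := by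
  let _ : MeasurableSpace ι := ⊤
  have : DiscreteMeasurableSpace ι := ⟨fun _ => trivial⟩
  have hint : Integrable (fun i => min (f i) ε) Measure.count := by
    refine integrable_count_iff.2 (hf.of_nonneg_of_le (fun i => norm_nonneg _) fun i => ?_)
    rw [Real.norm_of_nonneg (le_min (hf0 i) hε)]
    exact min_le_left _ _
  calc ∫ t in (0)..ε, ({i | t ≤ f i}.ncard : ℝ)
      = ∫ t in Ioc 0 ε, Measure.count.real {i | t ≤ min (f i) ε} := by
        rw [intervalIntegral.integral_of_le hε]
        refine setIntegral_congr_fun measurableSet_Ioc fun t ht => ?_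
        simp only [count_real_eq_ncard, le_min_iff, ht.2, and_true]
    _ = ∫ i, min (f i) ε ∂Measure.count :=
        (hint.integral_eq_integral_Ioc_meas_le (ae_of_all _ fun i => le_min (hf0 i) hε)
          (ae_of_all _ fun i => min_le_right _ _)).symm
    _ = ∑' i, min (f i) ε := by simp [integral_countable hint]

theorem integral_ncard_lt_eq_integral_ncard_le (a b : ℝ) :
    ∫ t in a..b, ({i | t < f i}.ncard : ℝ) = ∫ t in a..b, ({i | t ≤ f i}.ncard : ℝ) := by
  let _ : MeasurableSpace ι := ⊤
  have : DiscreteMeasurableSpace ι := ⟨fun _ => trivial⟩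
  refine intervalIntegral.integral_congr_ae ?_
  filter_upwards [meas_le_ae_eq_meas_lt Measure.count volume f] with t ht _
  simp only [← count_real_eq_ncard, measureReal_def, ht]

theorem intervalIntegrable_ncard_lt (hf : Summable f) (hf0 : 0 ≤ f) {ε : ℝ} (hε : 0 ≤ ε) :
    IntervalIntegrable (fun t => ({i | t < f i}.ncard : ℝ)) volume 0 ε := by
  let _ : MeasurableSpace ι := ⊤
  have : DiscreteMeasurableSpace ι := ⟨fun _ => trivial⟩
  rw [intervalIntegrable_iff_integrableOn_Ioc_of_le hε]
  have := Integrable.integrableOn_measureReal_lt (integrable_count_iff.2 hf.abs) (ae_of_all _ hf0)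
  simpa only [count_real_eq_ncard] using this.mono_set Ioc_subset_Ioi_self

theorem two_mul_integral_ncard_two_mul_le [Countable ι] (hf : Summable f) (hf0 : 0 ≤ f) {ε : ℝ}
    (hε : 0 ≤ ε) :
    2 * ∫ t in (0)..ε, ({i | 2 * t ≤ f i}.ncard : ℝ) = ∑' i, min (f i) (2 * ε) := by
  rw [intervalIntegral.integral_comp_mul_left (fun s => ({i | s ≤ f i}.ncard : ℝ)) two_ne_zero,
    mul_zero, integral_ncard_le_eq_tsum_min hf hf0 (by positivity), smul_eq_mul,
    mul_inv_cancel_left₀ two_ne_zero]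

theorem two_mul_integral_one_add_ncard_two_mul_lt [Countable ι] (hf : Summable f) (hf0 : 0 ≤ f)
    {ε : ℝ} (hε : 0 ≤ ε) :
    2 * ∫ t in (0)..ε, (1 + ({i | 2 * t < f i}.ncard : ℝ))
      = 2 * ε + ∑' i, min (f i) (2 * ε) := by
  have hint : IntervalIntegrable (fun t => ({i | 2 * t < f i}.ncard : ℝ)) volume 0 ε := by
    simpa using (intervalIntegrable_ncard_lt hf hf0 (by positivity : 0 ≤ 2 * ε)).comp_mul_left
      (c := 2)
  rw [intervalIntegral.integral_add intervalIntegrable_const hint, intervalIntegral.integral_const,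
    intervalIntegral.integral_comp_mul_left (fun s => ({i | s < f i}.ncard : ℝ)) two_ne_zero,
    integral_ncard_lt_eq_integral_ncard_le, ← intervalIntegral.integral_comp_mul_left
      (fun s => ({i | s ≤ f i}.ncard : ℝ)) two_ne_zero, mul_add,
    two_mul_integral_ncard_two_mul_le hf hf0 hε]
  simp

end LayerCake

theorem frontier_subset_of_sdiff_eq_iUnion {X ι : Type*} [TopologicalSpace X] {C A : Set X}
    {U : ι → Set X} (hC : IsClosed C) (hU : ∀ i, IsOpen (U i))
    (hdisj : Pairwise (Function.onFun Disjoint U)) (h : C \ A = ⋃ i, U i) (j : ι) :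
    frontier (U j) ⊆ A := by
  intro x hx
  rw [(hU j).frontier_eq] at hx
  by_contra hxA
  have hxC : x ∈ C :=
    closure_minimal (fun y hy => (h ▸ mem_iUnion_of_mem j hy : y ∈ C \ A).1) hC hx.1
  obtain ⟨i, hi⟩ := mem_iUnion.1 (h ▸ ⟨hxC, hxA⟩ : x ∈ ⋃ i, U i)
  obtain ⟨y, hyi, hyj⟩ := mem_closure_iff.1 hx.1 (U i) (hU i) hi
  obtain rfl : i = j := by_contra fun hij => Set.disjoint_left.1 (hdisj hij) hyi hyj
  exact hx.2 hi

theorem IsCompact.convexHull_eq_Icc {A : Set ℝ} (hA : IsCompact A) (hne : A.Nonempty) :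
    convexHull ℝ A = Icc (sInf A) (sSup A) := by
  refine (convexHull_min (fun _ hx => mem_Icc.2 ⟨csInf_le hA.bddBelow hx, le_csSup hA.bddAbove hx⟩)
    (convex_Icc _ _)).antisymm ?_
  rw [← segment_eq_Icc (csInf_le_csSup hne hA.bddBelow hA.bddAbove)]
  exact segment_subset_convexHull (hA.sInf_mem hne) (hA.sSup_mem hne)

theorem IsCompact.volume_cthickening_sdiff_convexHull {A : Set ℝ} (hA : IsCompact A)
    (hne : A.Nonempty) {ε : ℝ} (hε : 0 ≤ ε) :
    volume (cthickening ε A \ convexHull ℝ A) = ENNReal.ofReal (2 * ε) := by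
  have hm := hA.sInf_mem hne
  have hM := hA.sSup_mem hne
  have hsplit : cthickening ε A \ Icc (sInf A) (sSup A)
      = Ico (sInf A - ε) (sInf A) ∪ Ioc (sSup A) (sSup A + ε) := by
    ext x
    simp only [hA.cthickening_eq_biUnion_closedBall hε, Set.mem_sdiff, mem_iUnion, mem_closedBall,
      Real.dist_eq, exists_prop, mem_Icc, mem_union, mem_Ico, mem_Ioc, not_and_or, not_le]
    constructor
    · rintro ⟨⟨y, hyA, hy⟩, hx | hx⟩
      · exact Or.inl ⟨by linarith [csInf_le hA.bddBelow hyA, neg_abs_le (x - y)], hx⟩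
      · exact Or.inr ⟨hx, by linarith [le_csSup hA.bddAbove hyA, le_abs_self (x - y)]⟩
    · rintro (hx | hx)
      · exact ⟨⟨_, hm, abs_le.2 ⟨by linarith, by linarith⟩⟩, Or.inl hx.2⟩
      · exact ⟨⟨_, hM, abs_le.2 ⟨by linarith, by linarith⟩⟩, Or.inr hx.1⟩
  have hdisj : Disjoint (Ico (sInf A - ε) (sInf A)) (Ioc (sSup A) (sSup A + ε)) :=
    Set.disjoint_left.2 fun x h₁ h₂ => by
      linarith [h₁.2, h₂.1, csInf_le_csSup hne hA.bddBelow hA.bddAbove]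
  rw [hA.convexHull_eq_Icc hne, hsplit, measure_union hdisj measurableSet_Ioc, Real.volume_Ico,
    Real.volume_Ioc, sub_sub_cancel, add_sub_cancel_left, ← ENNReal.ofReal_add hε hε, two_mul]

theorem Ioo_inter_cthickening_eq {A : Set ℝ} (hA : IsCompact A) {a b ε : ℝ} (ha : a ∈ A)
    (hb : b ∈ A) (hgap : Disjoint (Ioo a b) A) (hε : 0 ≤ ε) :
    Ioo a b ∩ cthickening ε A = Ioo a b \ Ioo (a + ε) (b - ε) := by
  ext x
  simp only [hA.cthickening_eq_biUnion_closedBall hε, mem_inter_iff, mem_iUnion,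
    mem_closedBall, Real.dist_eq, Set.mem_sdiff, mem_Ioo, exists_prop, not_and_or, not_lt]
  refine and_congr_right fun hx => ⟨fun ⟨y, hyA, hy⟩ => ?_, fun h => ?_⟩
  · rcases le_or_gt y a with hya | hay
    · left; linarith [le_abs_self (x - y)]
    · have hby : b ≤ y := not_lt.1 fun hyb => Set.disjoint_left.1 hgap ⟨hay, hyb⟩ hyA
      right; linarith [neg_abs_le (x - y)]
  · rcases h with h | h
    · exact ⟨a, ha, abs_le.2 ⟨by linarith, by linarith⟩⟩
    · exact ⟨b, hb, abs_le.2 ⟨by linarith, by linarith⟩⟩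

theorem Real.volume_Ioo_sdiff_Ioo_add_sub {a b ε : ℝ} (hε : 0 ≤ ε) :
    volume (Ioo a b \ Ioo (a + ε) (b - ε)) = ENNReal.ofReal (min (b - a) (2 * ε)) := by
  rcases le_or_gt (b - a) (2 * ε) with h | h
  · rw [Ioo_eq_empty (a := a + ε) (b := b - ε) (by linarith), sdiff_empty, Real.volume_Ioo,
      min_eq_left h]
  · rw [measure_sdiff (Ioo_subset_Ioo (by linarith) (by linarith))
      measurableSet_Ioo.nullMeasurableSet measure_Ioo_lt_top.ne, Real.volume_Ioo, Real.volume_Ioo,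
      ← ENNReal.ofReal_sub _ (by linarith), min_eq_right h.le]
    ring_nf

theorem summable_sub_of_pairwise_disjoint_Ioo {ι : Type*} [Countable ι] {a b : ι → ℝ}
    {s : Set ℝ} (hs : Bornology.IsBounded s) (hab : ∀ j, 0 ≤ b j - a j)
    (hdisj : Pairwise (Function.onFun Disjoint fun j => Ioo (a j) (b j)))
    (hsub : ⋃ j, Ioo (a j) (b j) ⊆ s) :
    Summable fun j => b j - a j := by
  have hfin : ∑' j, ENNReal.ofReal (b j - a j) ≠ ∞ := by
    simp_rw [← Real.volume_Ioo]
    rw [← measure_iUnion hdisj fun _ => measurableSet_Ioo]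
    exact ((measure_mono hsub).trans_lt hs.measure_lt_top).ne
  exact (ENNReal.summable_toReal hfin).congr fun j => ENNReal.toReal_ofReal (hab j)

section Gaps

variable {ι : Type*} {A : Set ℝ} {a b : ι → ℝ}

theorem endpoints_mem_of_gap (hA : IsCompact A) (hne : A.Nonempty)
    (hdisj : Pairwise (Function.onFun Disjoint fun j => Ioo (a j) (b j)))
    (hunion : convexHull ℝ A \ A = ⋃ j, Ioo (a j) (b j)) {j : ι} (hj : a j < b j) :
    a j ∈ A ∧ b j ∈ A := by
  have hfr := frontier_subset_of_sdiff_eq_iUnion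
    (hA.convexHull_eq_Icc hne ▸ isClosed_Icc) (fun _ => isOpen_Ioo) hdisj hunion j
  rw [frontier_Ioo hj] at hfr
  exact ⟨hfr (mem_insert _ _), hfr (mem_insert_of_mem _ rfl)⟩

theorem volume_gap_inter_cthickening (hA : IsCompact A) (hne : A.Nonempty)
    (hdisj : Pairwise (Function.onFun Disjoint fun j => Ioo (a j) (b j)))
    (hunion : convexHull ℝ A \ A = ⋃ j, Ioo (a j) (b j)) {ε : ℝ} (hε : 0 ≤ ε) (j : ι) :
    volume (Ioo (a j) (b j) ∩ cthickening ε A) = ENNReal.ofReal (min (b j - a j) (2 * ε)) := by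
  rw [← Real.volume_Ioo_sdiff_Ioo_add_sub hε]
  rcases lt_or_ge (a j) (b j) with hj | hj
  · obtain ⟨ha, hb⟩ := endpoints_mem_of_gap hA hne hdisj hunion hj
    have hgap : Disjoint (Ioo (a j) (b j)) A :=
      Set.disjoint_left.2 fun x hx => (hunion ▸ mem_iUnion_of_mem j hx : x ∈ convexHull ℝ A \ A).2
    rw [Ioo_inter_cthickening_eq hA ha hb hgap hε]
  · simp [Ioo_eq_empty hj.not_gt]

theorem volume_cthickening_sdiff [Countable ι] (hA : IsCompact A) (hne : A.Nonempty)
    (hdisj : Pairwise (Function.onFun Disjoint fun j => Ioo (a j) (b j)))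
    (hunion : convexHull ℝ A \ A = ⋃ j, Ioo (a j) (b j)) {ε : ℝ} (hε : 0 ≤ ε) :
    volume (cthickening ε A \ A)
      = ENNReal.ofReal (2 * ε) + ∑' j, ENNReal.ofReal (min (b j - a j) (2 * ε)) := by
  have houter : (cthickening ε A \ A) \ convexHull ℝ A = cthickening ε A \ convexHull ℝ A := by
    rw [sdiff_sdiff, union_eq_right.2 (subset_convexHull ℝ A)]
  have hinner : (cthickening ε A \ A) ∩ convexHull ℝ A
      = ⋃ j, Ioo (a j) (b j) ∩ cthickening ε A := by
    rw [← iUnion_inter, ← hunion]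
    ext; simp only [mem_inter_iff, Set.mem_sdiff]; tauto
  have hmeas : MeasurableSet (convexHull ℝ A) := hA.convexHull_eq_Icc hne ▸ measurableSet_Icc
  rw [← measure_sdiff_add_inter _ hmeas, houter, hinner,
    hA.volume_cthickening_sdiff_convexHull hne hε,
    measure_iUnion (fun i j hij => (hdisj hij).mono inter_subset_left inter_subset_left)
      fun j => measurableSet_Ioo.inter isClosed_cthickening.measurableSet]
  exact congrArg _ (tsum_congr (volume_gap_inter_cthickening hA hne hdisj hunion hε))

end Gaps

theorem steiner_formula_dim_one (A : Set ℝ) (hA : IsCompact A) (hne : A.Nonempty)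
    (ℓ a b : ℕ → ℝ)
    (hlen : ∀ j, ℓ j = b j - a j)
    (hnn : ∀ j, 0 ≤ ℓ j)
    (hdisj : Pairwise (Function.onFun Disjoint fun j => Set.Ioo (a j) (b j)))
    (hunion : convexHull ℝ A \ A = ⋃ j, Set.Ioo (a j) (b j)) :
    ∀ ε > (0:ℝ),
      (volume (Metric.cthickening ε A \ A)).toReal =
        2 * ∫ t in (0:ℝ)..ε, (1 + (Set.ncard {j | 2 * t < ℓ j} : ℝ)) ∧
      (volume (Metric.cthickening ε A \ A)).toReal =
        2 * ε + 2 * ∫ t in (0:ℝ)..ε, (Set.ncard {j | 2 * t ≤ ℓ j} : ℝ) := by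
  intro ε hε
  obtain rfl : ℓ = fun j => b j - a j := funext hlen
  have hsum : Summable fun j => b j - a j :=
    summable_sub_of_pairwise_disjoint_Ioo (hA.convexHull_eq_Icc hne ▸ isBounded_Icc _ _) hnn
      hdisj (hunion ▸ sdiff_subset)
  have hmin : ∀ j, 0 ≤ min (b j - a j) (2 * ε) := fun j => le_min (hnn j) (by positivity)
  have hvol : (volume (cthickening ε A \ A)).toReal = 2 * ε + ∑' j, min (b j - a j) (2 * ε) := by
    rw [volume_cthickening_sdiff hA hne hdisj hunion hε.le,
      ← ENNReal.ofReal_tsum_of_nonneg hmin (hsum.of_nonneg_of_le hmin fun j => min_le_left _ _),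
      ← ENNReal.ofReal_add (by positivity) (tsum_nonneg hmin),
      ENNReal.toReal_ofReal (add_nonneg (by positivity) (tsum_nonneg hmin))]
  rw [hvol, two_mul_integral_one_add_ncard_two_mul_lt hsum hnn hε.le,
    two_mul_integral_ncard_two_mul_le hsum hnn hε.le]
  exact ⟨rfl, rfl⟩
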